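/- Fix k = 2 and β > 0. Let P_0 be the law of an n×n GOE matrix Z, and P_β the law of X = β v v^T + Z with v uniform on S^{n−1} independent of Z. Then liminf_{n→∞} ‖P_0 − P_β‖_TV ≥ 1 − 2Φ(−β/(2√2)) > 0, where Φ(x) = ∫_{−∞}^x e^{−z²/2} dz/√(2π) is the standard Gaussian distribution function. (This follows because the trace statistic S = tr(X) is distributed as N(0,2) under P_0 and as N(β,2) under P_β.) -/

import Mathlib

open MeasureTheory ProbabilityTheory Filter
open scoped ENNReal

noncomputable section

instance matrixMeasurableSpace {m n α : Type*} [MeasurableSpace α] :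
    MeasurableSpace (Matrix m n α) :=
  inferInstanceAs (MeasurableSpace (m → n → α))

/-- Product of i.i.d. standard Gaussians indexed by `ι`. -/
def stdGaussianPi (ι : Type*) [Fintype ι] : Measure (ι → ℝ) :=
  Measure.pi fun _ => gaussianReal 0 1

/-- GOE matrix law: `Z = (G + Gᵀ)/√(2n)` with `G` having i.i.d. `N(0,1)` entries; it is a
symmetric random matrix with independent upper-triangular entries `Z_ij ~ N(0,1/n)` for `i<j`
and `Z_ii ~ N(0,2/n)`. -/
def goe (n : ℕ) : Measure (Matrix (Fin n) (Fin n) ℝ) :=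
  (stdGaussianPi (Fin n × Fin n)).map
    fun g => Matrix.of fun i j => (g (i, j) + g (j, i)) / Real.sqrt (2 * n)

/-- The uniform (rotation-invariant) probability measure on the unit sphere `S^{n-1} ⊆ ℝⁿ`,
realized as the law of a normalized standard Gaussian vector. -/
def sphereUniform (n : ℕ) : Measure (EuclideanSpace ℝ (Fin n)) :=
  ((stdGaussianPi (Fin n)).map
      fun x => ((EuclideanSpace.equiv (Fin n) ℝ).symm x : EuclideanSpace ℝ (Fin n))).map
    fun v => ‖v‖⁻¹ • v

/-- Law of `β v vᵀ + Z` with `v` uniform on the unit sphere and `Z` an independent GOE matrix. -/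
def spikedGOE (n : ℕ) (β : ℝ) : Measure (Matrix (Fin n) (Fin n) ℝ) :=
  ((sphereUniform n).prod (goe n)).map
    fun p => Matrix.of fun i j => β * (p.1 i * p.1 j) + (p.2 : Matrix (Fin n) (Fin n) ℝ) i j

/-- Total variation distance `‖P − Q‖_TV = sup_A |P(A) − Q(A)|` over measurable sets `A`. -/
def tvDist {Ω : Type*} [MeasurableSpace Ω] (P Q : Measure Ω) : ℝ :=
  ⨆ s : {s : Set Ω // MeasurableSet s}, |(P s).toReal - (Q s).toReal|

/-!
Under the GOE the trace is a weighted sum of the independent diagonal Gaussians, hence `N(0, 2)`.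
Under the spiked model it gains `β tr(v vᵀ) = β ‖v‖² = β` almost surely, so it is `N(β, 2)`.
Total variation does not increase under a pushforward, and the half-line `{t ≤ β/2}` separates
`N(0, 2)` from `N(β, 2)` by `Φ(c) - Φ(-c) = 1 - 2Φ(-c)` with `c = β/(2√2)`, uniformly in `n`.
-/

open Real Set
open scoped NNReal

section TotalVariation

variable {Ω Ω' : Type*} [MeasurableSpace Ω] [MeasurableSpace Ω'] {P Q : Measure Ω}

lemma abs_measureReal_sub_le_tvDist [IsFiniteMeasure P] [IsFiniteMeasure Q] {s : Set Ω}
    (hs : MeasurableSet s) : |P.real s - Q.real s| ≤ tvDist P Q := by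
  refine le_ciSup (f := fun t : {t : Set Ω // MeasurableSet t} => |P.real t - Q.real t|)
    ⟨P.real univ + Q.real univ, ?_⟩ ⟨s, hs⟩
  rintro _ ⟨t, rfl⟩
  calc |P.real t - Q.real t| ≤ |P.real t| + |Q.real t| := abs_sub _ _
    _ ≤ P.real univ + Q.real univ := by
      rw [abs_of_nonneg measureReal_nonneg, abs_of_nonneg measureReal_nonneg]
      exact add_le_add (measureReal_mono (subset_univ _)) (measureReal_mono (subset_univ _))

lemma tvDist_le_one [IsProbabilityMeasure P] [IsProbabilityMeasure Q] : tvDist P Q ≤ 1 :=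
  haveI : Nonempty {s : Set Ω // MeasurableSet s} := ⟨⟨∅, .empty⟩⟩
  ciSup_le fun _ => abs_sub_le_of_nonneg_of_le measureReal_nonneg measureReal_le_one
    measureReal_nonneg measureReal_le_one

lemma tvDist_map_le [IsFiniteMeasure P] [IsFiniteMeasure Q] {f : Ω → Ω'} (hf : Measurable f) :
    tvDist (P.map f) (Q.map f) ≤ tvDist P Q :=
  haveI : Nonempty {s : Set Ω' // MeasurableSet s} := ⟨⟨∅, .empty⟩⟩
  ciSup_le fun t => by
    simpa only [← measureReal_def, map_measureReal_apply hf t.2] using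
      abs_measureReal_sub_le_tvDist (P := P) (Q := Q) (hf t.2)

end TotalVariation

section Gaussian

lemma map_pi_gaussianReal_sum_mul {ι : Type*} [Fintype ι] (c : ι → ℝ) :
    (Measure.pi fun _ : ι => gaussianReal 0 1).map (fun x => ∑ i, c i * x i)
      = gaussianReal 0 (∑ i, c i ^ 2).toNNReal := by
  have hL : (fun x : ι → ℝ => ∑ i, c i * x i) = innerSL ℝ (WithLp.toLp 2 c) ∘ WithLp.toLp 2 := by
    ext x
    simp [PiLp.inner_apply, mul_comm]
  rw [hL, ← Measure.map_map (by fun_prop) (by fun_prop), map_pi_eq_stdGaussian,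
    IsGaussian.map_eq_gaussianReal, integral_strongDual_stdGaussian, variance_dual_stdGaussian,
    innerSL_apply_norm, EuclideanSpace.real_norm_sq_eq]

lemma gaussianReal_Iic (μ : ℝ) {v : ℝ≥0} (hv : v ≠ 0) (t : ℝ) :
    gaussianReal μ v (Iic t) = gaussianReal 0 1 (Iic ((t - μ) / √v)) := by
  have hsqrt : 0 < √(v : ℝ) := Real.sqrt_pos.2 (by positivity)
  have hstd : gaussianReal μ v = (gaussianReal 0 1).map (fun x => √v * x + μ) := by
    change _ = Measure.map ((fun x => x + μ) ∘ fun x => √v * x) _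
    rw [← Measure.map_map (measurable_add_const μ) (measurable_const_mul _),
      gaussianReal_map_const_mul, gaussianReal_map_add_const]
    simp [Real.sq_sqrt v.coe_nonneg]
  rw [hstd, Measure.map_apply (by fun_prop) measurableSet_Iic]
  congr 1
  ext x
  simp only [mem_preimage, mem_Iic, le_div_iff₀ hsqrt]
  constructor <;> intro h <;> linarith

lemma measureReal_gaussianReal_Iic_neg {v : ℝ≥0} (hv : v ≠ 0) (c : ℝ) :
    (gaussianReal 0 v).real (Iic (-c)) = 1 - (gaussianReal 0 v).real (Iic c) := by
  have := nullSingletonClass_gaussianReal (μ := 0) hv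
  have hneg : (gaussianReal 0 v).real (Iic (-c)) = (gaussianReal 0 v).real (Ioi c) := by
    conv_lhs => rw [← neg_zero, ← gaussianReal_map_neg]
    rw [map_measureReal_apply measurable_neg measurableSet_Iic, measureReal_congr Ioi_ae_eq_Ici]
    congr 1
    ext x
    simp
  rw [hneg, ← compl_Iic, measureReal_compl measurableSet_Iic, probReal_univ]

lemma measureReal_gaussianReal_Iic_eq_integral (t : ℝ) :
    (gaussianReal 0 1).real (Iic t) = ∫ z in Iic t, exp (-z ^ 2 / 2) / √(2 * π) := by
  rw [measureReal_def, gaussianReal_apply_eq_integral 0 one_ne_zero, ENNReal.toReal_ofReal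
    (setIntegral_nonneg measurableSet_Iic fun x _ => gaussianPDFReal_nonneg 0 1 x)]
  refine setIntegral_congr_fun measurableSet_Iic fun z _ => ?_
  simp only [gaussianPDFReal, NNReal.coe_one, mul_one, sub_zero]
  ring

lemma measureReal_gaussianReal_Iic_strictMono (μ : ℝ) {v : ℝ≥0} (hv : v ≠ 0) :
    StrictMono fun t => (gaussianReal μ v).real (Iic t) := by
  intro a b hab
  have hpos : 0 < (gaussianReal μ v).real (Ioc a b) := by
    refine measureReal_nonneg.lt_of_ne' <| (measureReal_ne_zero_iff (by finiteness)).2 fun h => ?_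
    have := gaussianReal_absolutelyContinuous' μ hv h
    simp only [Real.volume_Ioc, ENNReal.ofReal_eq_zero, tsub_le_iff_right, zero_add] at this
    exact this.not_gt hab
  change _ < (gaussianReal μ v).real (Iic b)
  rw [← Iic_union_Ioc_eq_Iic hab.le,
    measureReal_union (Iic_disjoint_Ioc le_rfl) measurableSet_Ioc]
  linarith

lemma one_sub_two_mul_le_tvDist_gaussianReal (β : ℝ) {v : ℝ≥0} (hv : v ≠ 0) :
    1 - 2 * (gaussianReal 0 1).real (Iic (-(β / (2 * √v))))
      ≤ tvDist (gaussianReal 0 v) (gaussianReal β v) := by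
  have hsep : (gaussianReal 0 v).real (Iic (β / 2)) - (gaussianReal β v).real (Iic (β / 2))
      = 1 - 2 * (gaussianReal 0 1).real (Iic (-(β / (2 * √v)))) := by
    rw [measureReal_def, measureReal_def, gaussianReal_Iic 0 hv, gaussianReal_Iic β hv,
      ← measureReal_def, ← measureReal_def, show (β / 2 - β) / √v = -(β / (2 * √v)) by ring,
      show (β / 2 - 0) / √v = β / (2 * √v) by ring,
      measureReal_gaussianReal_Iic_neg one_ne_zero]
    ring
  rw [← hsep]
  exact (le_abs_self _).trans (abs_measureReal_sub_le_tvDist measurableSet_Iic)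

end Gaussian

section GOE

@[fun_prop]
lemma Measurable.matrix_of {α m n R : Type*} [MeasurableSpace α] [MeasurableSpace R]
    {f : α → m → n → R} (hf : Measurable f) : Measurable fun a => Matrix.of (f a) := hf

@[fun_prop]
lemma Matrix.measurable_trace {n R : Type*} [Fintype n] [AddCommMonoid R] [MeasurableSpace R]
    [MeasurableAdd₂ R] : Measurable (Matrix.trace : Matrix n n R → R) :=
  Finset.measurable_sum _ fun i _ => (measurable_pi_apply i).comp (measurable_pi_apply i)

instance isProbabilityMeasure_stdGaussianPi (ι : Type*) [Fintype ι] :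
    IsProbabilityMeasure (stdGaussianPi ι) := by
  unfold stdGaussianPi
  infer_instance

instance isProbabilityMeasure_goe (n : ℕ) : IsProbabilityMeasure (goe n) :=
  Measure.isProbabilityMeasure_map (by fun_prop)

instance isProbabilityMeasure_sphereUniform (n : ℕ) : IsProbabilityMeasure (sphereUniform n) := by
  rw [sphereUniform, Measure.map_map (by fun_prop) (by fun_prop)]
  exact Measure.isProbabilityMeasure_map (by fun_prop)

instance isProbabilityMeasure_spikedGOE (n : ℕ) (β : ℝ) :
    IsProbabilityMeasure (spikedGOE n β) :=
  Measure.isProbabilityMeasure_map (by fun_prop)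

lemma goe_map_trace {n : ℕ} (hn : n ≠ 0) : (goe n).map Matrix.trace = gaussianReal 0 2 := by
  set a := 2 / √(2 * n)
  have htr : (Matrix.trace ∘ fun g : Fin n × Fin n → ℝ =>
        Matrix.of fun i j => (g (i, j) + g (j, i)) / √(2 * n))
      = fun g => ∑ p : Fin n × Fin n, (if p.1 = p.2 then a else 0) * g p := by
    ext g
    simp only [Function.comp_apply, Matrix.trace, Matrix.diag_apply, Matrix.of_apply,
      Fintype.sum_prod_type, ite_mul, zero_mul, Finset.sum_ite_eq, Finset.mem_univ, if_true, a]
    exact Finset.sum_congr rfl fun i _ => by ring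
  have hvar : ∑ p : Fin n × Fin n, (if p.1 = p.2 then a else 0) ^ 2 = 2 := by
    simp only [ite_pow, ne_eq, OfNat.ofNat_ne_zero, not_false_eq_true, zero_pow,
      Fintype.sum_prod_type, Finset.sum_ite_eq, Finset.mem_univ, ↓reduceIte, Finset.sum_const,
      Finset.card_univ, Fintype.card_fin, nsmul_eq_mul, a, div_pow,
      Real.sq_sqrt (by positivity : (0 : ℝ) ≤ 2 * n)]
    field_simp
  rw [goe, Measure.map_map (by fun_prop) (by fun_prop), htr, stdGaussianPi,
    map_pi_gaussianReal_sum_mul, hvar]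
  simp

lemma ae_sphereUniform_norm_eq_one {n : ℕ} (hn : n ≠ 0) :
    ∀ᵐ v ∂sphereUniform n, ‖v‖ = 1 := by
  have := nullSingletonClass_gaussianReal (μ := 0) one_ne_zero
  let i₀ : Fin n := ⟨0, Nat.pos_of_ne_zero hn⟩
  rw [sphereUniform, Measure.map_map (by fun_prop) (by fun_prop),
    ae_map_iff (by fun_prop) (measurableSet_eq_fun measurable_norm measurable_const)]
  filter_upwards [Measure.ae_eval_ne (fun _ => gaussianReal 0 1) i₀ 0] with x hx
  have hx0 : (EuclideanSpace.equiv (Fin n) ℝ).symm x ≠ 0 := fun h =>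
    hx (by simpa using congrArg (· i₀) h)
  exact norm_smul_inv_norm hx0

lemma spikedGOE_map_trace {n : ℕ} (hn : n ≠ 0) (β : ℝ) :
    (spikedGOE n β).map Matrix.trace = gaussianReal β 2 := by
  rw [spikedGOE, Measure.map_map (by fun_prop) (by fun_prop)]
  have hae : (Matrix.trace ∘ fun p : EuclideanSpace ℝ (Fin n) × Matrix (Fin n) (Fin n) ℝ =>
        Matrix.of fun i j => β * (p.1 i * p.1 j) + p.2 i j)
      =ᵐ[(sphereUniform n).prod (goe n)] (fun M => β + Matrix.trace M) ∘ Prod.snd := by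
    filter_upwards [Measure.quasiMeasurePreserving_fst.ae (ae_sphereUniform_norm_eq_one hn)]
      with p hp
    simp [Matrix.trace, Finset.sum_add_distrib, ← Finset.mul_sum, ← sq,
      ← EuclideanSpace.real_norm_sq_eq, hp]
  rw [Measure.map_congr hae, ← Measure.map_map (by fun_prop) measurable_snd, Measure.map_snd_prod,
    measure_univ, one_smul]
  change Measure.map ((fun x => β + x) ∘ Matrix.trace) (goe n) = _
  rw [← Measure.map_map (measurable_const_add β) (by fun_prop), goe_map_trace hn,
    gaussianReal_map_const_add, zero_add]

end GOE

/-- for `k = 2` and `β > 0`,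
`liminf ‖P_0 − P_β‖_TV ≥ 1 − 2Φ(−β/(2√2)) > 0`, where `Φ` is the standard Gaussian CDF. -/
theorem goe_tv_liminf_positive (β : ℝ) (hβ : 0 < β) :
    1 - 2 * (∫ z in Set.Iic (-(β / (2 * Real.sqrt 2))),
        Real.exp (-z ^ 2 / 2) / Real.sqrt (2 * Real.pi))
      ≤ liminf (fun n => tvDist (goe n) (spikedGOE n β)) atTop ∧
    0 < 1 - 2 * (∫ z in Set.Iic (-(β / (2 * Real.sqrt 2))),
        Real.exp (-z ^ 2 / 2) / Real.sqrt (2 * Real.pi)) := by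
  set c := β / (2 * √2)
  rw [← measureReal_gaussianReal_Iic_eq_integral]
  constructor
  · refine le_liminf_of_le (isCoboundedUnder_ge_of_eventually_le atTop
      (.of_forall fun n => tvDist_le_one)) ?_
    filter_upwards [eventually_ne_atTop 0] with n hn
    calc 1 - 2 * (gaussianReal 0 1).real (Iic (-c))
        ≤ tvDist (gaussianReal 0 2) (gaussianReal β 2) := by
          simpa using one_sub_two_mul_le_tvDist_gaussianReal β two_ne_zero
      _ = tvDist ((goe n).map Matrix.trace) ((spikedGOE n β).map Matrix.trace) := by
          rw [goe_map_trace hn, spikedGOE_map_trace hn]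
      _ ≤ tvDist (goe n) (spikedGOE n β) := tvDist_map_le Matrix.measurable_trace
  · have hlt := measureReal_gaussianReal_Iic_strictMono 0 one_ne_zero
      (neg_lt_self (by positivity : 0 < c))
    have hsymm := measureReal_gaussianReal_Iic_neg one_ne_zero c
    linarith
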